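/- There exists a constant c > 0 such that the following holds. Suppose G, H, W, k, n satisfy Assumption (★) with constant c. Then for every integer x ≥ 2, every simple arc-system 𝒜 in G of length at least 2x and size at least 2x is such that G[𝒜] contains an independent set of size at least x² + 1. -/

import Mathlib

open Finset

/-- `σ` lists the vertices of `G` in the order of a Hamilton cycle `H`:
it is a bijection from `ZMod n` such that consecutive indices give adjacent vertices. -/
def IsHamOrder {V : Type} [Fintype V] (G : SimpleGraph V) (n : ℕ) (σ : ZMod n → V) : Prop :=
  Function.Bijective σ ∧ ∀ i : ZMod n, G.Adj (σ i) (σ (i + 1))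

/-- A vertex is problematic if it has degree at most `2k` or belongs to `W`. -/
def Problematic {V : Type} [Fintype V] [DecidableEq V] (G : SimpleGraph V)
    [DecidableRel G.Adj] (W : Finset V) (k : ℕ) (v : V) : Prop :=
  G.degree v ≤ 2 * k ∨ v ∈ W

/-- `G` has a cycle of length `ℓ` passing through all vertices of `S`. -/
def HasCycleThrough {V : Type} (G : SimpleGraph V) (ℓ : ℕ) (S : Set V) : Prop :=
  ∃ (u : V) (w : G.Walk u u), w.IsCycle ∧ w.length = ℓ ∧ ∀ x ∈ S, x ∈ w.support

/-- Assumption (★) with constant `c`: `G` is a graph on `n` vertices with Hamilton cycle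
(order) `σ`, independence number at most `k`, `W` has at most `20k²` vertices, `G` has no
cycle of length `n − 1` through all of `W`, and `n ≥ c·k^(11/5)`. -/
def StarAssumption {V : Type} [Fintype V] [DecidableEq V] (G : SimpleGraph V) [DecidableRel G.Adj]
    (n k : ℕ) (σ : ZMod n → V) (W : Finset V) (c : ℝ) : Prop :=
  Fintype.card V = n ∧ IsHamOrder G n σ ∧
  (∀ s : Finset V, (∀ u ∈ s, ∀ v ∈ s, u ≠ v → ¬ G.Adj u v) → s.card ≤ k) ∧
  W.card ≤ 20 * k ^ 2 ∧
  ¬ HasCycleThrough G (n - 1) (W : Set V) ∧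
  c * (k : ℝ) ^ ((11 : ℝ) / 5) ≤ (n : ℝ)

/-- Two vertices are consecutive if they are neighbours on the Hamilton cycle. -/
def Consec {V : Type} (n : ℕ) (σ : ZMod n → V) (u v : V) : Prop :=
  ∃ i : ZMod n, (σ i = u ∧ σ (i + 1) = v) ∨ (σ i = v ∧ σ (i + 1) = u)

/-- A continuous set of vertices: one forming a subpath (interval) of the Hamilton cycle. -/
def ContinuousSet {V : Type} [DecidableEq V] (n : ℕ) (σ : ZMod n → V) (S : Finset V) : Prop :=
  ∃ (i : ZMod n) (m : ℕ), S = (Finset.range m).image (fun j : ℕ => σ (i + (j : ZMod n)))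

/-- `B` is a continuous closure of `A`: a minimum-size continuous set containing `A`. -/
def IsClosure {V : Type} [DecidableEq V] (n : ℕ) (σ : ZMod n → V) (A B : Finset V) : Prop :=
  ContinuousSet n σ B ∧ A ⊆ B ∧
    ∀ B' : Finset V, ContinuousSet n σ B' → A ⊆ B' → B.card ≤ B'.card

/-- An arc-system: a family of arcs together with a choice of continuous closure for each
arc, such that closures of distinct arcs are disjoint, closures contain no problematic
vertex, and no arc contains two consecutive vertices. -/
structure ArcSystem {V : Type} [Fintype V] [DecidableEq V] (G : SimpleGraph V)
    [DecidableRel G.Adj] (n k : ℕ) (σ : ZMod n → V) (W : Finset V) where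
  arcs : Finset (Finset V)
  cl : Finset V → Finset V
  closure_spec : ∀ A ∈ arcs, IsClosure n σ A (cl A)
  closures_disjoint : ∀ A ∈ arcs, ∀ B ∈ arcs, A ≠ B → Disjoint (cl A) (cl B)
  no_problematic : ∀ A ∈ arcs, ∀ v ∈ cl A, ¬ Problematic G W k v
  no_consec : ∀ A ∈ arcs, ∀ u ∈ A, ∀ v ∈ A, u ≠ v → ¬ Consec n σ u v

namespace ArcSystem

variable {V : Type} [Fintype V] [DecidableEq V] {G : SimpleGraph V} [DecidableRel G.Adj]
  {n k : ℕ} {σ : ZMod n → V} {W : Finset V}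

/-- An arc-system is independent if every closure has at most `k` vertices. -/
def Independent (𝒜 : ArcSystem G n k σ W) : Prop :=
  ∀ A ∈ 𝒜.arcs, (𝒜.cl A).card ≤ k

/-- Every arc of the system has at least `l` vertices. -/
def LengthGe (𝒜 : ArcSystem G n k σ W) (l : ℕ) : Prop :=
  ∀ A ∈ 𝒜.arcs, l ≤ A.card

end ArcSystem

/-- A vertex set `s` is `M₂`-free (for `G`) if the subgraph induced by `s`
contains no two vertex-disjoint edges. -/
def M2Free {V : Type} (G : SimpleGraph V) (s : Finset V) : Prop :=
  ¬ ∃ a b x y : V, a ∈ s ∧ b ∈ s ∧ x ∈ s ∧ y ∈ s ∧ G.Adj a b ∧ G.Adj x y ∧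
      a ≠ x ∧ a ≠ y ∧ b ≠ x ∧ b ≠ y

namespace ArcSystem

variable {V : Type} [Fintype V] [DecidableEq V] {G : SimpleGraph V} [DecidableRel G.Adj]
  {n k : ℕ} {σ : ZMod n → V} {W : Finset V}

/-- An arc-system is simple if it is independent and any two distinct arcs induce an
`M₂`-free subgraph of `G`. -/
def Simple (𝒜 : ArcSystem G n k σ W) : Prop :=
  𝒜.Independent ∧ ∀ A ∈ 𝒜.arcs, ∀ B ∈ 𝒜.arcs, A ≠ B → M2Free G (A ∪ B)

end ArcSystem

/-- `G[𝒜]` contains an independent set of size at least `m`. -/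
def HasIndepInArcs {V : Type} [Fintype V] [DecidableEq V] (G : SimpleGraph V)
    [DecidableRel G.Adj] {n k : ℕ} {σ : ZMod n → V} {W : Finset V}
    (𝒜 : ArcSystem G n k σ W) (m : ℕ) : Prop :=
  ∃ I : Finset V, (∀ v ∈ I, ∃ A ∈ 𝒜.arcs, v ∈ A) ∧
    (∀ u ∈ I, ∀ v ∈ I, u ≠ v → ¬ G.Adj u v) ∧ m ≤ I.card

/-- The constants `a_p = 10·3^p`. -/
def aP (p : ℕ) : ℕ := 10 * 3 ^ p

/-- The constants `b_p = 1000^p·4^(p²)`. -/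
def bP (p : ℕ) : ℕ := 1000 ^ p * 4 ^ (p ^ 2)

/-!
Two disjoint sets whose union induces no two disjoint edges have all the edges between them
passing through one vertex. At most one arc of a simple arc-system spans an edge, so `x` arcs
are independent sets of size at least `2x`; deleting one such vertex for each ordered pair of
them leaves an independent set of at least `2x² − x(x − 1) = x² + x` vertices.
-/

section M2Free

variable {V : Type} [DecidableEq V] {G : SimpleGraph V} {A B : Finset V}

theorem M2Free.eq_or_eq_of_adj_of_adj (hAB : Disjoint A B) (h : M2Free G (A ∪ B))
    {a u b v : V} (ha : a ∈ A) (hu : u ∈ A) (hb : b ∈ B) (hv : v ∈ B)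
    (hab : G.Adj a b) (huv : G.Adj u v) : a = u ∨ b = v := by
  by_contra! hne
  exact h ⟨a, b, u, v, mem_union_left _ ha, mem_union_right _ hb, mem_union_left _ hu,
    mem_union_right _ hv, hab, huv, hne.1, fun h => disjoint_left.mp hAB ha (h ▸ hv),
    fun h => disjoint_left.mp hAB hu (h ▸ hb), hne.2⟩

theorem M2Free.exists_card_le_one_cover (hAB : Disjoint A B)
    (h : M2Free G (A ∪ B)) :
    ∃ C : Finset V, #C ≤ 1 ∧ ∀ u ∈ A, ∀ v ∈ B, G.Adj u v → u ∈ C ∨ v ∈ C := by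
  by_cases hedge : ∃ a ∈ A, ∃ b ∈ B, G.Adj a b
  swap
  · push Not at hedge
    exact ⟨∅, by simp, fun u hu v hv huv => absurd huv (hedge u hu v hv)⟩
  obtain ⟨a, ha, b, hb, hab⟩ := hedge
  by_cases hstar : ∀ u ∈ A, ∀ v ∈ B, G.Adj u v → u = a
  · exact ⟨{a}, by simp, fun u hu v hv huv => .inl (mem_singleton.2 (hstar u hu v hv huv))⟩
  push Not at hstar
  obtain ⟨u, hu, v, hv, huv, hua⟩ := hstar
  obtain rfl : b = v :=
    (h.eq_or_eq_of_adj_of_adj hAB ha hu hb hv hab huv).resolve_left (Ne.symm hua)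
  refine ⟨{b}, by simp, fun p hp q hq hpq => .inr (mem_singleton.2 ?_)⟩
  rcases h.eq_or_eq_of_adj_of_adj hAB ha hp hb hq hab hpq with rfl | hbq
  · exact ((h.eq_or_eq_of_adj_of_adj hAB hu hp hb hq huv hpq).resolve_left hua).symm
  · exact hbq.symm

theorem not_m2Free_of_adj_of_adj (hAB : Disjoint A B) {a a' b b' : V}
    (ha : a ∈ A) (ha' : a' ∈ A) (hb : b ∈ B) (hb' : b' ∈ B)
    (hA : G.Adj a a') (hB : G.Adj b b') : ¬ M2Free G (A ∪ B) := fun h =>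
  h ⟨a, a', b, b', mem_union_left _ ha, mem_union_left _ ha', mem_union_right _ hb,
    mem_union_right _ hb', hA, hB, fun h => disjoint_left.mp hAB ha (h ▸ hb),
    fun h => disjoint_left.mp hAB ha (h ▸ hb'), fun h => disjoint_left.mp hAB ha' (h ▸ hb),
    fun h => disjoint_left.mp hAB ha' (h ▸ hb')⟩

end M2Free

section Family

variable {V : Type} [DecidableEq V] {G : SimpleGraph V} {S : Finset (Finset V)}

theorem subsingleton_setOf_not_isIndepSet (hdisj : (S : Set (Finset V)).PairwiseDisjoint id)
    (hm2 : (S : Set (Finset V)).Pairwise fun A B => M2Free G (A ∪ B)) :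
    {A ∈ (S : Set (Finset V)) | ¬ G.IsIndepSet (A : Set V)}.Subsingleton := by
  rintro A ⟨hA, hAedge⟩ B ⟨hB, hBedge⟩
  by_contra hne
  simp only [SimpleGraph.isIndepSet_iff, Set.Pairwise, not_forall, not_not, mem_coe]
    at hAedge hBedge
  obtain ⟨a, ha, a', ha', -, haa'⟩ := hAedge
  obtain ⟨b, hb, b', hb', -, hbb'⟩ := hBedge
  exact not_m2Free_of_adj_of_adj (hdisj hA hB hne) ha ha' hb hb' haa' hbb' (hm2 hA hB hne)

theorem exists_isIndepSet_subset_biUnion (hdisj : (S : Set (Finset V)).PairwiseDisjoint id)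
    (hm2 : (S : Set (Finset V)).Pairwise fun A B => M2Free G (A ∪ B))
    (hindep : ∀ A ∈ S, G.IsIndepSet (A : Set V)) :
    ∃ I ⊆ S.biUnion id, G.IsIndepSet (I : Set V) ∧ ∑ A ∈ S, #A ≤ #I + #S.offDiag := by
  have hcover (p : Finset V × Finset V) : ∃ C : Finset V, #C ≤ 1 ∧ (p ∈ S.offDiag →
      ∀ u ∈ p.1, ∀ v ∈ p.2, G.Adj u v → u ∈ C ∨ v ∈ C) := by
    by_cases hp : p ∈ S.offDiag
    · obtain ⟨hp1, hp2, hne⟩ := mem_offDiag.1 hp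
      obtain ⟨C, hC, hcov⟩ := (hm2 hp1 hp2 hne).exists_card_le_one_cover (hdisj hp1 hp2 hne)
      exact ⟨C, hC, fun _ => hcov⟩
    · exact ⟨∅, by simp, fun h => absurd h hp⟩
  choose cover hcover_card hcover using hcover
  set U := S.biUnion id
  set C := S.offDiag.biUnion cover
  refine ⟨U \ C, sdiff_subset, ?_, ?_⟩
  · intro u hu v hv huv hadj
    simp only [coe_sdiff, Set.mem_sdiff, mem_coe, U, mem_biUnion, id] at hu hv
    obtain ⟨⟨A, hA, huA⟩, huC⟩ := hu
    obtain ⟨⟨B, hB, hvB⟩, hvC⟩ := hv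
    by_cases hAB : A = B
    · subst hAB
      exact hindep A hA huA hvB huv hadj
    have hmem : (A, B) ∈ S.offDiag := mem_offDiag.2 ⟨hA, hB, hAB⟩
    rcases hcover _ hmem u huA v hvB hadj with h | h
    · exact huC (mem_biUnion.2 ⟨_, hmem, h⟩)
    · exact hvC (mem_biUnion.2 ⟨_, hmem, h⟩)
  · have hC : #C ≤ #S.offDiag := by
      simpa only [mul_one] using card_biUnion_le_card_mul _ _ 1 fun p _ => hcover_card p
    have hU : #U = ∑ A ∈ S, #A := card_biUnion hdisj
    have := card_le_card_sdiff_add_card (s := U) (t := C)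
    omega

end Family

namespace ArcSystem

variable {V : Type} [Fintype V] [DecidableEq V] {G : SimpleGraph V} [DecidableRel G.Adj]
  {n k : ℕ} {σ : ZMod n → V} {W : Finset V}

theorem pairwiseDisjoint_arcs (𝒜 : ArcSystem G n k σ W) :
    (𝒜.arcs : Set (Finset V)).PairwiseDisjoint id := fun A hA B hB hne =>
  (𝒜.closures_disjoint A hA B hB hne).mono (𝒜.closure_spec A hA).2.1
    (𝒜.closure_spec B hB).2.1

theorem Simple.pairwise_m2Free {𝒜 : ArcSystem G n k σ W} (h𝒜 : 𝒜.Simple) :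
    (𝒜.arcs : Set (Finset V)).Pairwise fun A B => M2Free G (A ∪ B) :=
  fun A hA B hB => h𝒜.2 A hA B hB

theorem Simple.exists_indep_subfamily {𝒜 : ArcSystem G n k σ W} (h𝒜 : 𝒜.Simple) {x : ℕ}
    (hx : x + 1 ≤ #𝒜.arcs) :
    ∃ S ⊆ 𝒜.arcs, #S = x ∧ ∀ A ∈ S, G.IsIndepSet (A : Set V) := by
  classical
  set P : Finset V → Prop := fun A => G.IsIndepSet (A : Set V)
  have hsplit := card_filter_add_card_filter_not (s := 𝒜.arcs) (p := P)
  have hbad : #(𝒜.arcs.filter fun A => ¬ P A) ≤ 1 :=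
    card_le_one.2 fun A hA B hB => subsingleton_setOf_not_isIndepSet 𝒜.pairwiseDisjoint_arcs
      h𝒜.pairwise_m2Free (mem_filter.1 hA) (mem_filter.1 hB)
  obtain ⟨S, hS, hSx⟩ := exists_subset_card_eq (show x ≤ #(𝒜.arcs.filter P) by omega)
  exact ⟨S, hS.trans (filter_subset _ _), hSx, fun A hA => (mem_filter.1 (hS hA)).2⟩

end ArcSystem

/-- There is a constant `c > 0` such that under Assumption (★) with
constant `c`: for every integer `x ≥ 2`, every simple arc-system of length at least `2x`
and size at least `2x` yields an independent set of size at least `x² + 1` in `G[𝒜]`. -/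
theorem statement9 :
    ∃ c : ℝ, 0 < c ∧
      ∀ (V : Type) [Fintype V] [DecidableEq V] (G : SimpleGraph V) [DecidableRel G.Adj]
        (n k : ℕ) (σ : ZMod n → V) (W : Finset V),
        StarAssumption G n k σ W c →
        ∀ x : ℕ, 2 ≤ x →
          ∀ 𝒜 : ArcSystem G n k σ W,
            𝒜.Simple → 𝒜.LengthGe (2 * x) → 2 * x ≤ 𝒜.arcs.card →
            HasIndepInArcs G 𝒜 (x ^ 2 + 1) := by
  refine ⟨1, one_pos, fun V _ _ G _ n k σ W _ x hx 𝒜 hsimple hlen hsize => ?_⟩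
  obtain ⟨S, hS, hSx, hSindep⟩ := hsimple.exists_indep_subfamily (x := x) (by omega)
  obtain ⟨I, hIU, hI, hIcard⟩ := exists_isIndepSet_subset_biUnion
    (𝒜.pairwiseDisjoint_arcs.subset hS) (hsimple.pairwise_m2Free.mono hS) hSindep
  have hsum : x * (2 * x) ≤ ∑ A ∈ S, #A :=
    hSx ▸ card_nsmul_le_sum S card (2 * x) fun A hA => hlen A (hS hA)
  refine ⟨I, fun v hv => ?_, fun u hu v hv => hI hu hv, ?_⟩
  · obtain ⟨A, hA, hvA⟩ := mem_biUnion.1 (hIU hv)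
    exact ⟨A, hS hA, hvA⟩
  · rw [offDiag_card, hSx] at hIcard
    have : x ≤ x * x := Nat.le_mul_self x
    have : x * (2 * x) = 2 * (x * x) := by ring
    rw [sq]
    omega
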